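/- arXiv:2605.09626 — 5 statements merged into one kernel-verified Lean document; each statement's English description precedes it below -/
import Mathlib

section
/- Let x₁, y₁, x₂, y₂ be real polynomials, and set z₁ = x₁ + i·y₁ and z₂ = x₂ + i·y₂, complex polynomials obtained by mapping coefficients into ℂ. Assume that (x₁')² + (y₁')² = (x₂')² + (y₂')² as real polynomials and that this polynomial is nonzero, and assume that the derivatives z₁' and z₂' are associates in ℂ[X] (each divides the other, i.e. they have the same roots with the same multiplicities and the same degree). Then there exist λ ∈ ℂ with |λ| = 1 and c ∈ ℂ such that z₂ = λ·z₁ + c. -/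
/-!
Writing `z = x + i y` for a real plane curve, `z' * conj z' = x'² + y'²`. If `z₂' = a z₁'`, then
conjugating and multiplying gives `q = |a|² q` for the common nonzero arc length polynomial `q`, so
`|a| = 1`; and `z₂ - a z₁` has zero derivative, hence is a constant.
-/

open Polynomial ComplexConjugate

namespace Polynomial

lemma exists_eq_C_mul_of_associated {R : Type*} [CommSemiring R] [NoZeroDivisors R] {p q : R[X]}
    (h : Associated p q) : ∃ a : R, q = C a * p := by
  obtain ⟨u, rfl⟩ := h
  obtain ⟨a, -, ha⟩ := isUnit_iff.mp u.isUnit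
  exact ⟨a, by rw [ha, mul_comm]⟩

lemma exists_eq_C_mul_add_C_of_derivative_eq_C_mul {R : Type*} [CommRing R]
    [IsAddTorsionFree R] {p q : R[X]} {a : R} (h : derivative q = C a * derivative p) :
    ∃ c : R, q = C a * p + C c := by
  refine ⟨(q - C a * p).coeff 0, ?_⟩
  rw [← eq_C_of_derivative_eq_zero (by rw [derivative_sub, derivative_C_mul, h, sub_self])]
  ring

lemma map_conj_map_ofReal (p : ℝ[X]) :
    (p.map (algebraMap ℝ ℂ)).map (starRingEnd ℂ) = p.map (algebraMap ℝ ℂ) := by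
  rw [map_map]
  congr 1
  ext r
  simp

lemma derivative_map_ofReal_add_I_mul (x y : ℝ[X]) :
    derivative (x.map (algebraMap ℝ ℂ) + C Complex.I * y.map (algebraMap ℝ ℂ)) =
      (derivative x).map (algebraMap ℝ ℂ) + C Complex.I * (derivative y).map (algebraMap ℝ ℂ) := by
  simp [derivative_map]

lemma mul_map_conj_map_ofReal_add_I_mul (x y : ℝ[X]) :
    (x.map (algebraMap ℝ ℂ) + C Complex.I * y.map (algebraMap ℝ ℂ)) *
        (x.map (algebraMap ℝ ℂ) + C Complex.I * y.map (algebraMap ℝ ℂ)).map (starRingEnd ℂ) =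
      (x ^ 2 + y ^ 2).map (algebraMap ℝ ℂ) := by
  have hI : (C Complex.I : ℂ[X]) ^ 2 = -1 := by rw [← C_pow, Complex.I_sq, C_neg, C_1]
  simp only [Polynomial.map_add, Polynomial.map_mul, Polynomial.map_pow, map_C,
    map_conj_map_ofReal, Complex.conj_I, C_neg]
  linear_combination -(y.map (algebraMap ℝ ℂ)) ^ 2 * hI

lemma norm_eq_one_of_mul_map_conj_eq {w : ℂ[X]} {a : ℂ} (hw : w * w.map (starRingEnd ℂ) ≠ 0)
    (h : C a * w * (C a * w).map (starRingEnd ℂ) = w * w.map (starRingEnd ℂ)) : ‖a‖ = 1 := by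
  have hC : C a * w * (C a * w).map (starRingEnd ℂ) =
      C (a * conj a) * (w * w.map (starRingEnd ℂ)) := by
    rw [Polynomial.map_mul, map_C, C_mul]
    ring
  rw [hC, mul_eq_right₀ hw, ← C_1, C_inj, Complex.mul_conj'] at h
  exact (pow_eq_one_iff_of_nonneg (norm_nonneg a) two_ne_zero).mp (by exact_mod_cast h)

end Polynomial

theorem uniqueness_for_fixed_splitting
    (x₁ y₁ x₂ y₂ : ℝ[X])
    (z₁ z₂ : ℂ[X])
    (hz₁ : z₁ = x₁.map (algebraMap ℝ ℂ) + Polynomial.C Complex.I * y₁.map (algebraMap ℝ ℂ))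
    (hz₂ : z₂ = x₂.map (algebraMap ℝ ℂ) + Polynomial.C Complex.I * y₂.map (algebraMap ℝ ℂ))
    (hq : derivative x₁ ^ 2 + derivative y₁ ^ 2 = derivative x₂ ^ 2 + derivative y₂ ^ 2)
    (hq0 : derivative x₁ ^ 2 + derivative y₁ ^ 2 ≠ 0)
    (hdiv : Associated (derivative z₁) (derivative z₂)) :
    ∃ (l c : ℂ), ‖l‖ = 1 ∧ z₂ = Polynomial.C l * z₁ + Polynomial.C c := by
  obtain ⟨a, ha⟩ := exists_eq_C_mul_of_associated hdiv
  obtain ⟨c, hc⟩ := exists_eq_C_mul_add_C_of_derivative_eq_C_mul ha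
  have hq₁ : derivative z₁ * (derivative z₁).map (starRingEnd ℂ) =
      (derivative x₁ ^ 2 + derivative y₁ ^ 2).map (algebraMap ℝ ℂ) := by
    rw [hz₁, derivative_map_ofReal_add_I_mul, mul_map_conj_map_ofReal_add_I_mul]
  have hq₂ : derivative z₂ * (derivative z₂).map (starRingEnd ℂ) =
      (derivative x₂ ^ 2 + derivative y₂ ^ 2).map (algebraMap ℝ ℂ) := by
    rw [hz₂, derivative_map_ofReal_add_I_mul, mul_map_conj_map_ofReal_add_I_mul]
  refine ⟨a, c, norm_eq_one_of_mul_map_conj_eq (w := derivative z₁) ?_ ?_, hc⟩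
  · rw [hq₁]
    exact Polynomial.map_ne_zero hq0
  · rw [← ha, hq₁, hq₂, hq]
end

section
/- Let a, b ∈ ℂ with a² + b² ≠ 0, and let h₁, h₂ be functions holomorphic on a neighborhood of 0 in ℂ. Define x(u) = a/u + h₁(u) and y(u) = b/u + h₂(u) for u ≠ 0 near 0. Then there exist c ∈ ℂ with c² = a² + b² and a function g holomorphic on a (possibly smaller) neighborhood of 0 such that for all u ≠ 0 in that neighborhood, x'(u)² + y'(u)² = (c/u² + g(u))². In particular, the local square root of the arc length differential has a pole of order exactly 2 at u = 0 with zero residue, and x'² + y'² has a pole of order 4. -/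
/-!
Writing `x' = (-a + u² h₁'(u)) / u²` and `y' = (-b + u² h₂'(u)) / u²` gives
`u⁴ (x'² + y'²) = c² + u² S(u)` with `c² = a² + b² ≠ 0` and `S` holomorphic at `0`.
The holomorphic square root `q` of `c² + u² S` with `q(0) = c` satisfies `q = c + u² g` with
`g = S / (q + c)`, and then `x'² + y'² = (q / u²)² = (c / u² + g)²`.
-/

open Complex Filter Topology

section SquareRoot

variable {E : Type*} [NormedAddCommGroup E] [NormedSpace ℂ E]

theorem AnalyticAt.exists_sq_eq_of_ne_zero {f : E → ℂ} {z : E} {c : ℂ}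
    (hf : AnalyticAt ℂ f z) (hfz : f z ≠ 0) (hc : c ^ 2 = f z) :
    ∃ q : E → ℂ, AnalyticAt ℂ q z ∧ q z = c ∧ ∀ᶠ w in 𝓝 z, q w ^ 2 = f w := by
  refine ⟨fun w => c * Complex.exp (Complex.log (f w / f z) / 2), ?_, by simp [div_self hfz], ?_⟩
  · have hslit : f z / f z ∈ slitPlane := by rw [div_self hfz]; exact one_mem_slitPlane
    exact analyticAt_const.mul (((hf.div analyticAt_const hfz).clog hslit).div
      analyticAt_const two_ne_zero).cexp
  · filter_upwards [hf.continuousAt.eventually_ne hfz] with w hfw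
    rw [mul_pow, ← exp_nat_mul, hc, Nat.cast_ofNat, mul_div_cancel₀ _ two_ne_zero,
      exp_log (div_ne_zero hfw hfz), mul_div_cancel₀ _ hfz]

theorem exists_analyticAt_add_mul_sq_eq {φ S : E → ℂ} {z : E} {c : ℂ}
    (hφ : AnalyticAt ℂ φ z) (hφz : φ z = 0) (hS : AnalyticAt ℂ S z) (hc : c ≠ 0) :
    ∃ g : E → ℂ, AnalyticAt ℂ g z ∧
      ∀ᶠ w in 𝓝 z, (c + φ w * g w) ^ 2 = c ^ 2 + φ w * S w := by
  have hP : AnalyticAt ℂ (fun w => c ^ 2 + φ w * S w) z := analyticAt_const.add (hφ.mul hS)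
  obtain ⟨q, hq, hqz, hq_sq⟩ :=
    hP.exists_sq_eq_of_ne_zero (c := c) (by simp [hφz, hc]) (by simp [hφz])
  have hqcz : q z + c ≠ 0 := by rw [hqz, ← two_mul]; exact mul_ne_zero two_ne_zero hc
  refine ⟨fun w => S w / (q w + c), hS.div (hq.add analyticAt_const) hqcz, ?_⟩
  filter_upwards [hq_sq, (hq.continuousAt.add continuousAt_const).eventually_ne hqcz]
    with w hqw (hqcw : q w + c ≠ 0)
  -- `c + φ S / (q + c) = (c q + q²) / (q + c) = q`
  have hroot : c + φ w * (S w / (q w + c)) = q w := by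
    field_simp
    linear_combination -hqw
  rw [hroot, hqw]

end SquareRoot

theorem deriv_const_div_add {𝕜 : Type*} [NontriviallyNormedField 𝕜] {h : 𝕜 → 𝕜} {u : 𝕜}
    (a : 𝕜) (hu : u ≠ 0) (hh : DifferentiableAt 𝕜 h u) :
    deriv (fun v => a / v + h v) u = -a / u ^ 2 + deriv h u := by
  rw [deriv_fun_add (by fun_prop (disch := exact hu)) hh, deriv_const_div_id]

theorem AnalyticAt.eventually_deriv_const_div_add {h : ℂ → ℂ} (hh : AnalyticAt ℂ h 0) (a : ℂ) :
    ∀ᶠ u in 𝓝[≠] (0 : ℂ), deriv (fun v => a / v + h v) u = -a / u ^ 2 + deriv h u := by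
  filter_upwards [hh.eventually_analyticAt.filter_mono nhdsWithin_le_nhds, self_mem_nhdsWithin]
    with u hu hu0
  exact deriv_const_div_add a hu0 hu.differentiableAt

theorem pole_of_arc_length_at_infinity
    (a b : ℂ) (hab : a ^ 2 + b ^ 2 ≠ 0)
    (h₁ h₂ : ℂ → ℂ) (hh₁ : AnalyticAt ℂ h₁ 0) (hh₂ : AnalyticAt ℂ h₂ 0) :
    ∃ c : ℂ, c ^ 2 = a ^ 2 + b ^ 2 ∧
      ∃ g : ℂ → ℂ, AnalyticAt ℂ g 0 ∧
        ∀ᶠ u in nhdsWithin (0 : ℂ) {(0 : ℂ)}ᶜ,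
          (deriv (fun v => a / v + h₁ v) u) ^ 2 + (deriv (fun v => b / v + h₂ v) u) ^ 2 =
            (c / u ^ 2 + g u) ^ 2 := by
  obtain ⟨c, hc⟩ := IsAlgClosed.exists_pow_nat_eq (a ^ 2 + b ^ 2) two_pos
  have hc0 : c ≠ 0 := by rintro rfl; exact hab (by simpa using hc.symm)
  obtain ⟨g, hg, hg_sq⟩ := exists_analyticAt_add_mul_sq_eq (z := 0) (φ := fun u : ℂ => u ^ 2)
    (S := fun u => -2 * (a * deriv h₁ u + b * deriv h₂ u) +
      u ^ 2 * (deriv h₁ u ^ 2 + deriv h₂ u ^ 2))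
    (by fun_prop) (by simp) (by fun_prop) hc0
  refine ⟨c, hc, g, hg, ?_⟩
  filter_upwards [hh₁.eventually_deriv_const_div_add a, hh₂.eventually_deriv_const_div_add b,
    hg_sq.filter_mono nhdsWithin_le_nhds, self_mem_nhdsWithin] with u hx hy hgu (hu : u ≠ 0)
  rw [hx, hy]
  field_simp
  linear_combination -hgu - hc
end

section
/- Let k ≥ 1 be a natural number and let f be a nonzero rational function with complex coefficients. If the rational function (f')^k / f^{k−1} (where f' denotes the derivative of the rational function f) is a polynomial, i.e. lies in the image of ℂ[X] inside the field of rational functions, then f itself is a polynomial. -/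
open Polynomial

/-- Formal derivative of a rational function, via the quotient rule on
numerator and denominator. -/
noncomputable def RatFunc.deriv' {K : Type*} [Field K] (q : RatFunc K) : RatFunc K :=
  algebraMap K[X] (RatFunc K)
      (Polynomial.derivative q.num * q.denom - q.num * Polynomial.derivative q.denom) /
    algebraMap K[X] (RatFunc K) (q.denom ^ 2)

/-!
Write `f = n / d` in lowest terms with `d` monic. If `d ≠ 1`, it has a root `a`, of multiplicity
`m ≥ 1`, and `n(a) ≠ 0`. In `f' = (n' d - n d') / d²` the numerator is not divisible by
`(X - a)^m`: the term `n' d` is, while `n d'` vanishes at `a` to order exactly `m - 1`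
(characteristic zero). Clearing denominators in `(f')^k / f^(k-1) = g` gives
`g · d^(k+1) · n^(k-1) = (n' d - n d')^k`, so `((X - a)^m)^k` divides `(n' d - n d')^k`,
which in the factorial ring `ℂ[X]` forces `(X - a)^m ∣ n' d - n d'`.
-/

namespace Polynomial

variable {K : Type*} [Field K]

theorem not_isRoot_of_isCoprime_of_isRoot {p q : K[X]} {a : K} (hpq : IsCoprime p q)
    (hq : q.IsRoot a) : ¬ p.IsRoot a := fun hp =>
  not_isUnit_X_sub_C a (hpq.isUnit_of_dvd' (dvd_iff_isRoot.2 hp) (dvd_iff_isRoot.2 hq))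

theorem not_pow_rootMultiplicity_dvd_derivative_mul_sub [CharZero K] {n d : K[X]} {a : K}
    (hd : d ≠ 0) (hda : d.IsRoot a) (hna : ¬ n.IsRoot a) :
    ¬ (X - C a) ^ rootMultiplicity a d ∣ derivative n * d - n * derivative d := by
  intro h
  have hm : 0 < rootMultiplicity a d := (rootMultiplicity_pos hd).2 hda
  have hd' : derivative d ≠ 0 :=
    derivative_ne_zero.2 (natDegree_pos_iff_degree_pos.2 (degree_pos_of_root hd hda)).ne'
  have hdvd : (X - C a) ^ rootMultiplicity a d ∣ n * derivative d := by
    have := dvd_sub (dvd_mul_of_dvd_right (pow_rootMultiplicity_dvd d a) (derivative n)) h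
    rwa [sub_sub_cancel] at this
  have hcop := (irreducible_X_sub_C a).coprime_pow_of_not_dvd (rootMultiplicity a d)
    (mt dvd_iff_isRoot.1 hna)
  apply pow_rootMultiplicity_not_dvd hd' a
  rw [derivative_rootMultiplicity_of_root hda, Nat.sub_add_cancel hm]
  exact hcop.symm.dvd_of_dvd_mul_left hdvd

end Polynomial

namespace RatFunc

variable {K : Type*} [Field K]

theorem deriv'_pow_div_pow_mul {f : RatFunc K} (hf : f ≠ 0) {k : ℕ} (hk : 1 ≤ k) :
    f.deriv' ^ k / f ^ (k - 1) *
        algebraMap K[X] (RatFunc K) (f.denom ^ (k + 1) * f.num ^ (k - 1)) =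
      algebraMap K[X] (RatFunc K)
        ((derivative f.num * f.denom - f.num * derivative f.denom) ^ k) := by
  obtain ⟨j, rfl⟩ := Nat.exists_eq_add_of_le' hk
  have hn := algebraMap_ne_zero (num_ne_zero hf)
  have hd := algebraMap_ne_zero f.denom_ne_zero
  have hnd := f.num_div_denom
  rw [deriv']
  generalize f.num = n at hn hnd ⊢
  generalize f.denom = d at hd hnd ⊢
  subst hnd
  simp only [map_pow, map_mul, Nat.add_sub_cancel]
  rw [div_pow, div_pow, div_div_div_eq, div_mul_eq_mul_div, div_eq_iff (by positivity)]
  ring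

end RatFunc

theorem polynomial_of_polynomial_k_differential
    (k : ℕ) (hk : 1 ≤ k) (f : RatFunc ℂ) (hf : f ≠ 0)
    (hpoly : f.deriv' ^ k / f ^ (k - 1) ∈
      Set.range (algebraMap ℂ[X] (RatFunc ℂ))) :
    f ∈ Set.range (algebraMap ℂ[X] (RatFunc ℂ)) := by
  obtain ⟨g, hg⟩ := hpoly
  refine ⟨f.num, ?_⟩
  by_contra hnum
  have hd1 : f.denom ≠ 1 := fun h => hnum (by simpa [h] using f.num_div_denom)
  obtain ⟨a, ha⟩ := Complex.exists_root <| natDegree_pos_iff_degree_pos.1 <|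
    Nat.pos_of_ne_zero (mt f.monic_denom.natDegree_eq_zero.1 hd1)
  have hna := not_isRoot_of_isCoprime_of_isRoot f.isCoprime_num_denom ha
  apply not_pow_rootMultiplicity_dvd_derivative_mul_sub f.denom_ne_zero ha hna
  have key := RatFunc.deriv'_pow_div_pow_mul hf hk
  rw [← hg, ← map_mul, (RatFunc.algebraMap_injective ℂ).eq_iff] at key
  rw [← UniqueFactorizationMonoid.pow_dvd_pow_iff_dvd (Nat.one_le_iff_ne_zero.1 hk), ← key]
  exact (pow_dvd_pow_of_dvd (pow_rootMultiplicity_dvd _ a) k).trans <|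
    ((pow_dvd_pow _ k.le_succ).mul_right _).mul_left _
end

section
/- Let x, y be rational functions with real coefficients, not both constant, and let z' = x' + i·y' be the corresponding derivative, a nonzero rational function with complex coefficients (coefficients of x', y' mapped into ℂ). Assume that all complex roots of the numerator of z' and all complex roots of the denominator of z' are real. Then there exist real numbers a, b, c with (a, b) ≠ (0, 0) such that a·x + b·y = c as rational functions; in particular, the image of the curve t ↦ (x(t), y(t)) is contained in a straight line. -/
open Polynomial

/-- The ring homomorphism `RatFunc K →+* RatFunc L` acting on coefficients via `φ`. -/
noncomputable def RatFunc.coeffMap {K L : Type*} [Field K] [Field L] (φ : K →+* L) :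
    RatFunc K →+* RatFunc L :=
  RatFunc.mapRingHom (Polynomial.mapRingHom φ)
    (nonZeroDivisors_le_comap_nonZeroDivisors_of_injective _
      (Polynomial.map_injective φ φ.injective))

/-!
Since all roots of the numerator and denominator of `z'` are real, both factor into real linear
factors, so `z' = c • R` with `c ∈ ℂ` and `R` a real rational function. Conjugating coefficients
separates real and imaginary parts: `x' = (Re c) R` and `y' = (Im c) R`. Hence
`(Im c) x - (Re c) y` has zero derivative, so it is constant (and if `c = 0`, `x` itself is).
-/

theorem Polynomial.Splits.exists_eq_C_leadingCoeff_mul_map {K S : Type*} [Field K] [Ring S]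
    {p : K[X]} (hp : p.Splits) (i : S →+* K) (hr : ∀ a ∈ p.roots, a ∈ i.range) :
    ∃ q : S[X], p = C p.leadingCoeff * q.map i := by
  rcases eq_or_ne p 0 with rfl | hp0
  · exact ⟨0, by simp⟩
  have hlc : p.leadingCoeff ≠ 0 := leadingCoeff_ne_zero.mpr hp0
  have hmonic : (C p.leadingCoeff⁻¹ * p).Monic :=
    monic_C_mul_of_mul_leadingCoeff_eq_one (inv_mul_cancel₀ hlc)
  obtain ⟨q, hq⟩ := (mem_lifts _).mp <| (hp.C_mul _).mem_lift_of_roots_mem_range hmonic i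
    (by rwa [roots_C_mul _ (inv_ne_zero hlc)])
  exact ⟨q, by rw [hq, ← mul_assoc, ← C_mul, mul_inv_cancel₀ hlc, C_1, one_mul]⟩

namespace RatFunc

section coeffMap

variable {K L M : Type*} [Field K] [Field L] [Field M]

theorem coeffMap_div (φ : K →+* L) (p q : K[X]) :
    coeffMap φ (algebraMap K[X] (RatFunc K) p / algebraMap K[X] (RatFunc K) q) =
      algebraMap L[X] (RatFunc L) (p.map φ) / algebraMap L[X] (RatFunc L) (q.map φ) :=
  map_apply_div _ (nonZeroDivisors_le_comap_nonZeroDivisors_of_injective _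
    (Polynomial.map_injective φ φ.injective)) p q

theorem coeffMap_C (φ : K →+* L) (a : K) : coeffMap φ (C a) = C (φ a) := by
  simpa [algebraMap_C] using coeffMap_div φ (Polynomial.C a) 1

theorem coeffMap_coeffMap (φ : K →+* L) (ψ : L →+* M) (w : RatFunc K) :
    coeffMap ψ (coeffMap φ w) = coeffMap (ψ.comp φ) w := by
  rw [← w.num_div_denom, coeffMap_div, coeffMap_div, coeffMap_div, Polynomial.map_map,
    Polynomial.map_map]

theorem exists_eq_C_mul_coeffMap_of_roots_mem_range [Algebra K L] [IsAlgClosed L]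
    (z : RatFunc L) (hnum : ∀ w ∈ z.num.roots, w ∈ (algebraMap K L).range)
    (hden : ∀ w ∈ z.denom.roots, w ∈ (algebraMap K L).range) :
    ∃ (c : L) (R : RatFunc K), z = C c * coeffMap (algebraMap K L) R := by
  obtain ⟨P, hP⟩ := (IsAlgClosed.splits z.num).exists_eq_C_leadingCoeff_mul_map _ hnum
  obtain ⟨Q, hQ⟩ := (IsAlgClosed.splits z.denom).exists_eq_C_leadingCoeff_mul_map _ hden
  rw [z.monic_denom.leadingCoeff, C_1, one_mul] at hQ
  refine ⟨z.num.leadingCoeff, algebraMap K[X] (RatFunc K) P / algebraMap K[X] (RatFunc K) Q, ?_⟩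
  rw [coeffMap_div, ← hQ, ← algebraMap_C, mul_div_assoc', ← map_mul, ← hP, num_div_denom]

end coeffMap

theorem coeffMap_ofReal_add_I_mul_inj {a b a' b' : RatFunc ℝ} :
    coeffMap (algebraMap ℝ ℂ) a + C Complex.I * coeffMap (algebraMap ℝ ℂ) b =
        coeffMap (algebraMap ℝ ℂ) a' + C Complex.I * coeffMap (algebraMap ℝ ℂ) b' ↔
      a = a' ∧ b = b' := by
  refine ⟨fun h => ?_, by rintro ⟨rfl, rfl⟩; rfl⟩
  set f := coeffMap (algebraMap ℝ ℂ)
  have hreal : ∀ w, coeffMap (starRingEnd ℂ) (f w) = f w := fun w => by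
    rw [coeffMap_coeffMap, show (starRingEnd ℂ).comp (algebraMap ℝ ℂ) = algebraMap ℝ ℂ from
      RingHom.ext Complex.conj_ofReal]
  have hconj := congrArg (coeffMap (starRingEnd ℂ)) h
  simp only [map_add, map_mul, coeffMap_C, hreal, Complex.conj_I, map_neg] at hconj
  have ha : (2 : RatFunc ℂ) * (f a - f a') = 0 := by linear_combination h + hconj
  have hb : 2 * C Complex.I * (f b - f b') = 0 := by linear_combination h - hconj
  have hI : (C Complex.I : RatFunc ℂ) ≠ 0 := (_root_.map_ne_zero C).mpr Complex.I_ne_zero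
  simp only [mul_eq_zero, two_ne_zero, hI, false_or, sub_eq_zero] at ha hb
  exact ⟨f.injective ha, f.injective hb⟩

section deriv'

variable {K : Type*} [Field K]

theorem deriv'_div {n d : K[X]} (hd : d ≠ 0) :
    (algebraMap K[X] (RatFunc K) n / algebraMap K[X] (RatFunc K) d).deriv' =
      algebraMap K[X] (RatFunc K) (derivative n * d - n * derivative d) /
        algebraMap K[X] (RatFunc K) (d ^ 2) := by
  set q := algebraMap K[X] (RatFunc K) n / algebraMap K[X] (RatFunc K) d
  have hnd : n * q.denom = q.num * d := by
    refine algebraMap_injective K ?_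
    rw [map_mul, map_mul, ← div_eq_div_iff (algebraMap_ne_zero hd)
      (algebraMap_ne_zero q.denom_ne_zero), num_div_denom]
  have hnd' := congrArg derivative hnd
  rw [derivative_mul, derivative_mul] at hnd'
  rw [deriv', div_eq_div_iff (algebraMap_ne_zero (pow_ne_zero 2 q.denom_ne_zero))
      (algebraMap_ne_zero (pow_ne_zero 2 hd)), ← map_mul, ← map_mul]
  congr 1
  linear_combination (-(d * q.denom)) * hnd' +
    (derivative d * q.denom + d * derivative q.denom) * hnd

theorem deriv'_add (x y : RatFunc K) : (x + y).deriv' = x.deriv' + y.deriv' := by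
  have hsum : x + y = algebraMap K[X] (RatFunc K) (x.num * y.denom + y.num * x.denom) /
      algebraMap K[X] (RatFunc K) (x.denom * y.denom) := by
    conv_lhs => rw [← x.num_div_denom, ← y.num_div_denom]
    rw [div_add_div _ _ (algebraMap_ne_zero x.denom_ne_zero)
      (algebraMap_ne_zero y.denom_ne_zero)]
    simp only [map_add, map_mul]
    ring
  rw [hsum, deriv'_div (mul_ne_zero x.denom_ne_zero y.denom_ne_zero), deriv', deriv']
  have := algebraMap_ne_zero (K := K) x.denom_ne_zero
  have := algebraMap_ne_zero (K := K) y.denom_ne_zero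
  simp only [derivative_mul, map_add, map_mul, map_sub, map_pow]
  field_simp
  ring

theorem deriv'_C_mul (a : K) (x : RatFunc K) : (C a * x).deriv' = C a * x.deriv' := by
  have h : C a * x = algebraMap K[X] (RatFunc K) (Polynomial.C a * x.num) /
      algebraMap K[X] (RatFunc K) x.denom := by
    rw [map_mul, algebraMap_C, mul_div_assoc, num_div_denom]
  rw [h, deriv'_div x.denom_ne_zero, deriv', ← algebraMap_C]
  simp only [derivative_mul, derivative_C, zero_mul, zero_add, map_sub, map_mul]
  ring

theorem eq_C_of_deriv'_eq_zero [CharZero K] {x : RatFunc K} (h : x.deriv' = 0) :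
    ∃ c, x = C c := by
  have hwr : derivative x.num * x.denom = x.num * derivative x.denom := by
    rwa [deriv', div_eq_zero_iff, or_iff_left (algebraMap_ne_zero (pow_ne_zero 2 x.denom_ne_zero)),
      ← map_zero (algebraMap K[X] (RatFunc K)), (algebraMap_injective K).eq_iff,
      sub_eq_zero] at h
  have hdenom : x.denom = 1 := by
    have hdvd : x.denom ∣ derivative x.denom :=
      x.isCoprime_num_denom.symm.dvd_of_dvd_mul_left ⟨derivative x.num, by rw [← hwr, mul_comm]⟩
    rw [← x.monic_denom.natDegree_eq_zero]
    exact derivative_eq_zero.mp (dvd_derivative_iff.mp hdvd)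
  rw [hdenom, mul_one, derivative_one, mul_zero] at hwr
  obtain ⟨c, hc⟩ : ∃ c, x.num = Polynomial.C c := ⟨_, eq_C_of_derivative_eq_zero hwr⟩
  exact ⟨c, by rw [← x.num_div_denom, hdenom, hc, map_one, div_one, algebraMap_C]⟩

theorem exists_C_mul_add_C_mul_eq_C_of_deriv'_eq [CharZero K] {x y R : RatFunc K} {a b : K}
    (hx : x.deriv' = C a * R) (hy : y.deriv' = C b * R) :
    ∃ a b c : K, (a, b) ≠ (0, 0) ∧ C a * x + C b * y = C c := by
  by_cases hab : (a, b) = (0, 0)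
  · obtain ⟨c, hc⟩ := eq_C_of_deriv'_eq_zero (x := x) (by simp_all)
    exact ⟨1, 0, c, by simp, by simp [hc]⟩
  · obtain ⟨c, hc⟩ := eq_C_of_deriv'_eq_zero (x := C b * x + C (-a) * y) <| by
      rw [deriv'_add, deriv'_C_mul, deriv'_C_mul, hx, hy, map_neg]
      ring
    refine ⟨b, -a, c, fun h => hab ?_, hc⟩
    simp_all

end deriv'

end RatFunc

theorem line_of_real_singularities_general
    (x y : RatFunc ℝ)
    (z' : RatFunc ℂ)
    (hz' : z' = RatFunc.coeffMap (algebraMap ℝ ℂ) x.deriv' +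
      RatFunc.C Complex.I * RatFunc.coeffMap (algebraMap ℝ ℂ) y.deriv')
    (hnum : ∀ w : ℂ, z'.num.IsRoot w → w.im = 0)
    (hden : ∀ w : ℂ, z'.denom.IsRoot w → w.im = 0) :
    ∃ a b c : ℝ, (a, b) ≠ (0, 0) ∧
      RatFunc.C a * x + RatFunc.C b * y = RatFunc.C c := by
  have hreal (p : ℂ[X]) (hp : ∀ w, p.IsRoot w → w.im = 0) :
      ∀ w ∈ p.roots, w ∈ (algebraMap ℝ ℂ).range := fun w hw =>
    ⟨w.re, Complex.ext (by simp) (by simp [hp w (isRoot_of_mem_roots hw)])⟩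
  obtain ⟨c, R, hR⟩ :=
    RatFunc.exists_eq_C_mul_coeffMap_of_roots_mem_range z' (hreal _ hnum) (hreal _ hden)
  set f := RatFunc.coeffMap (algebraMap ℝ ℂ)
  have hc : RatFunc.C c = f (RatFunc.C c.re) + RatFunc.C Complex.I * f (RatFunc.C c.im) := by
    rw [RatFunc.coeffMap_C, RatFunc.coeffMap_C, ← map_mul, ← map_add, mul_comm]
    simp
  obtain ⟨hx, hy⟩ := RatFunc.coeffMap_ofReal_add_I_mul_inj.mp <|
    show f x.deriv' + _ * f y.deriv' = f (RatFunc.C c.re * R) + _ * f (RatFunc.C c.im * R) by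
      rw [← hz', hR, hc, map_mul, map_mul]
      ring
  exact RatFunc.exists_C_mul_add_C_mul_eq_C_of_deriv'_eq hx hy

theorem line_of_real_singularities
    (x y : RatFunc ℝ)
    (hnc : ¬ ((∃ c : ℝ, x = RatFunc.C c) ∧ (∃ c : ℝ, y = RatFunc.C c)))
    (z' : RatFunc ℂ)
    (hz' : z' = RatFunc.coeffMap (algebraMap ℝ ℂ) x.deriv' +
      RatFunc.C Complex.I * RatFunc.coeffMap (algebraMap ℝ ℂ) y.deriv')
    (hnum : ∀ w : ℂ, z'.num.IsRoot w → w.im = 0)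
    (hden : ∀ w : ℂ, z'.denom.IsRoot w → w.im = 0) :
    ∃ a b c : ℝ, (a, b) ≠ (0, 0) ∧
      RatFunc.C a * x + RatFunc.C b * y = RatFunc.C c :=
  line_of_real_singularities_general x y z' hz' hnum hden
end

section
/- Let x, y ∈ ℝ[X] be real polynomials, let z = x + i·y ∈ ℂ[X] be the complex polynomial obtained by mapping coefficients into ℂ, and suppose q = (x')² + (y')² is not the zero polynomial. Then for every real number α, the multiplicity of α as a root of q (computed in ℂ[X] after mapping coefficients of q into ℂ) equals 2 times the multiplicity of α as a root of the derivative z' in ℂ[X]. -/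
open Polynomial

theorem real_order_of_q_eq_twice_order_of_dz
    (x y : ℝ[X])
    (z : ℂ[X])
    (hz : z = x.map (algebraMap ℝ ℂ) + Polynomial.C Complex.I * y.map (algebraMap ℝ ℂ))
    (hq : derivative x ^ 2 + derivative y ^ 2 ≠ 0) (α : ℝ) :
    ((derivative x ^ 2 + derivative y ^ 2).map (algebraMap ℝ ℂ)).rootMultiplicity (α : ℂ) =
      2 * (derivative z).rootMultiplicity (α : ℂ) := by
  set A : ℂ[X] := (derivative x).map (algebraMap ℝ ℂ) with hA
  set B : ℂ[X] := (derivative y).map (algebraMap ℝ ℂ) with hB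
  have hP : derivative z = A + Polynomial.C Complex.I * B := by
    simp [hz, hA, hB, derivative_map]
  set P : ℂ[X] := A + Polynomial.C Complex.I * B with hPdef
  set Q : ℂ[X] := A - Polynomial.C Complex.I * B with hQdef
  have hmapq : (derivative x ^ 2 + derivative y ^ 2).map (algebraMap ℝ ℂ) = P * Q := by
    rw [Polynomial.map_add, Polynomial.map_pow, Polynomial.map_pow, hPdef, hQdef]
    have h2 : (Polynomial.C Complex.I) ^ 2 = -1 := by
      rw [← Polynomial.C_pow, Complex.I_sq, map_neg, map_one]
    have hexp : (A + Polynomial.C Complex.I * B) * (A - Polynomial.C Complex.I * B)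
        = A ^ 2 - (Polynomial.C Complex.I) ^ 2 * B ^ 2 := by ring
    rw [hexp, h2]
    ring
  have hPQ : P * Q ≠ 0 := by
    rw [← hmapq]
    exact (Polynomial.map_ne_zero_iff (algebraMap ℝ ℂ).injective).mpr hq
  -- Q is the conjugate of P
  have hconjA : A.map (starRingEnd ℂ) = A := by
    rw [hA, map_map]
    congr 1
    ext r
    simp [Complex.conj_ofReal]
  have hconjB : B.map (starRingEnd ℂ) = B := by
    rw [hB, map_map]
    congr 1
    ext r
    simp [Complex.conj_ofReal]
  have hQconj : P.map (starRingEnd ℂ) = Q := by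
    rw [hPdef, hQdef, Polynomial.map_add, Polynomial.map_mul, Polynomial.map_C,
      hconjA, hconjB]
    simp [sub_eq_add_neg]
  have hrmQ : Q.rootMultiplicity (α : ℂ) = P.rootMultiplicity (α : ℂ) := by
    rw [← hQconj]
    have := (Polynomial.eq_rootMultiplicity_map (p := P)
      (f := (starRingEnd ℂ : ℂ →+* ℂ)) (starRingEnd ℂ).injective (α : ℂ)).symm
    rwa [Complex.conj_ofReal] at this
  rw [hmapq, Polynomial.rootMultiplicity_mul hPQ, hrmQ, hP, two_mul]
end
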